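/- With m = 25, n = 6886, t = 25090: 12·s(627251, 172769740) = -3 + 2/172769740 + 25090/6886, and in particular |12·s(627251, 172769740) - 7/11| < 1/100. -/

import Mathlib

noncomputable def saw (x : ℝ) : ℝ :=
  if Int.fract x = 0 then 0 else Int.fract x - 1/2

noncomputable def dedekindSum (m n : ℤ) : ℝ :=
  ∑ k ∈ Finset.Icc 1 n.toNat, saw ((k : ℝ) / (n : ℝ)) * saw ((m : ℝ) * (k : ℝ) / (n : ℝ))

open Finset

/-!
Dedekind reciprocity, `12 (s(h,k) + s(k,h)) = -3 + h/k + k/h + 1/(hk)` for coprime `h, k > 0`,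
together with `s(h,k) = s(h mod k, k)` and `s(0,k) = 0`, evaluates `s(h,k)` along the Euclidean
algorithm.

Reciprocity follows Rademacher. Write `hi = k q_i + r_i`; since `i ↦ r_i` permutes `{1, …, k-1}`,
`12 k s(h,k)` is an explicit polynomial minus `12 T(h,k)`, where `T(h,k) = ∑ i q_i`. Comparing
`∑ r_i² = ∑ i²` and counting the lattice points below the line `y = hx/k` expresses `∑ q_i²`
through `T(k,h)`, which gives the symmetric identity
`12 (h T(h,k) + k T(k,h)) = (h-1)(k-1)(8hk-h-k-1)`.
-/

lemma saw_zero : saw 0 = 0 := by simp [saw]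

lemma saw_one : saw 1 = 0 := by simp [saw]

lemma saw_intCast_add (n : ℤ) (x : ℝ) : saw (n + x) = saw x := by
  simp only [saw, Int.fract_intCast_add]

lemma saw_natCast_div {a k : ℕ} (hk : 0 < k) (ha : ¬ k ∣ a) :
    saw (a / k) = (a % k : ℕ) / k - 1 / 2 := by
  have hmod : ((a % k : ℕ) : ℝ) / k ≠ 0 :=
    div_ne_zero (Nat.cast_ne_zero.2 fun h => ha (Nat.dvd_of_mod_eq_zero h)) (by positivity)
  rw [saw, Int.fract_div_natCast_eq_div_natCast_mod, if_neg hmod]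

lemma dedekindSum_zero_left (n : ℤ) : dedekindSum 0 n = 0 := by
  simp [dedekindSum, saw_zero]

lemma dedekindSum_add_mul (m q n : ℤ) : dedekindSum (m + q * n) n = dedekindSum m n := by
  refine sum_congr rfl fun i _ => congrArg _ ?_
  rcases eq_or_ne (n : ℝ) 0 with hn | hn
  · simp [hn]
  · have hshift : ((m + q * n : ℤ) : ℝ) * i / n = ((q * i : ℤ) : ℝ) + m * i / n := by
      push_cast
      field_simp
      ring
    rw [hshift, saw_intCast_add]

lemma dedekindSum_natCast_mod (a n : ℕ) : dedekindSum (a % n : ℕ) n = dedekindSum a n := by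
  rw [← dedekindSum_add_mul _ (a / n : ℕ), ← Nat.cast_mul, ← Nat.cast_add, Nat.mod_add_div']

lemma Nat.Coprime.not_dvd_mul_of_lt {h k i : ℕ} (hcop : h.Coprime k) (hi : 0 < i) (hik : i < k) :
    ¬ k ∣ h * i :=
  fun hdvd => Nat.not_dvd_of_pos_of_lt hi hik (hcop.symm.dvd_of_dvd_mul_left hdvd)

lemma sum_Ico_mul_mod {M : Type*} [AddCommMonoid M] {h k : ℕ} (hcop : h.Coprime k)
    (f : ℕ → M) : ∑ i ∈ Ico 1 k, f (h * i % k) = ∑ i ∈ Ico 1 k, f i := by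
  have hmaps : Set.MapsTo (fun i => h * i % k) (Ico 1 k) (Ico 1 k) := by
    intro i hi
    simp only [coe_Ico, Set.mem_Ico] at hi ⊢
    exact ⟨Nat.pos_of_ne_zero fun h0 =>
      hcop.not_dvd_mul_of_lt hi.1 hi.2 (Nat.dvd_of_mod_eq_zero h0), Nat.mod_lt _ (by omega)⟩
  have hinj : Set.InjOn (fun i => h * i % k) (Ico 1 k) := by
    intro a ha b hb hab
    simp only [coe_Ico, Set.mem_Ico] at ha hb
    have := Nat.ModEq.cancel_left_of_coprime hcop.symm hab
    rwa [Nat.ModEq, Nat.mod_eq_of_lt ha.2, Nat.mod_eq_of_lt hb.2] at this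
  exact sum_nbij _ (fun _ hi => hmaps hi) hinj
    (surjOn_of_injOn_of_card_le _ hmaps hinj le_rfl) fun _ _ => rfl

lemma natCast_mod_eq_sub {R : Type*} [CommRing R] (a k : ℕ) :
    ((a % k : ℕ) : R) = a - k * (a / k : ℕ) := by
  rw [eq_sub_iff_add_eq, ← Nat.cast_mul, ← Nat.cast_add, Nat.mod_add_div]

lemma sum_Ico_id_mul_two {R : Type*} [CommRing R] (k : ℕ) :
    2 * ∑ i ∈ Ico 1 k, (i : R) = k * (k - 1) := by
  induction k with
  | zero => simp
  | succ k ih =>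
    rcases k.eq_zero_or_pos with rfl | hk
    · simp
    · rw [sum_Ico_succ_top hk, mul_add, ih]
      push_cast
      ring

lemma sum_Ico_sq_mul_six {R : Type*} [CommRing R] (k : ℕ) :
    6 * ∑ i ∈ Ico 1 k, (i : R) ^ 2 = (k - 1) * k * (2 * k - 1) := by
  induction k with
  | zero => simp
  | succ k ih =>
    rcases k.eq_zero_or_pos with rfl | hk
    · simp
    · rw [sum_Ico_succ_top hk, mul_add, ih]
      push_cast
      ring

lemma sum_Ico_two_mul_sub_one (q : ℕ) : ∑ M ∈ Ico 1 (q + 1), (2 * (M : ℤ) - 1) = q ^ 2 := by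
  induction q with
  | zero => simp
  | succ q ih =>
    rw [sum_Ico_succ_top (by omega), ih]
    push_cast
    ring

lemma sum_sq_eq_sum_Ico_mul_card {ι : Type*} (s : Finset ι) (q : ι → ℕ) {n : ℕ}
    (hq : ∀ i ∈ s, q i < n) :
    ∑ i ∈ s, (q i : ℤ) ^ 2 = ∑ M ∈ Ico 1 n, (2 * (M : ℤ) - 1) * #{i ∈ s | M ≤ q i} := by
  have hsq : ∀ i ∈ s, (q i : ℤ) ^ 2 = ∑ M ∈ Ico 1 n, if M ≤ q i then 2 * (M : ℤ) - 1 else 0 := by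
    intro i hi
    have hfilter : {M ∈ Ico 1 n | M ≤ q i} = Ico 1 (q i + 1) := by
      ext M
      simp only [mem_filter, mem_Ico]
      have := hq i hi
      omega
    rw [← sum_filter, hfilter, sum_Ico_two_mul_sub_one]
  rw [sum_congr rfl hsq, sum_comm]
  refine sum_congr rfl fun M _ => ?_
  rw [← sum_filter, sum_const, nsmul_eq_mul, mul_comm]

lemma filter_le_mul_div_eq_Ioo {h k M : ℕ} (hcop : h.Coprime k) (hk : 0 < k) (hM : 0 < M)
    (hMh : M < h) : {i ∈ Ico 1 k | M ≤ h * i / k} = Ioo (k * M / h) k := by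
  ext i
  have hne : k * M ≠ h * i := fun heq =>
    hcop.symm.not_dvd_mul_of_lt hM hMh ⟨i, heq⟩
  simp only [mem_filter, mem_Ico, mem_Ioo]
  rw [Nat.le_div_iff_mul_le hk, Nat.div_lt_iff_lt_mul (by omega), mul_comm M, mul_comm i]
  rcases i.eq_zero_or_pos with rfl | hi
  · simp
  · omega

def weightedFloorSum (h k : ℕ) : ℕ := ∑ i ∈ Ico 1 k, i * (h * i / k)

lemma sum_Ico_div_mul_two {h k : ℕ} (hcop : h.Coprime k) (hk : 0 < k) :
    2 * ∑ i ∈ Ico 1 k, ((h * i / k : ℕ) : ℤ) = (h - 1) * (k - 1) := by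
  have hperm := sum_Ico_mul_mod hcop (fun r => (r : ℤ))
  simp only [natCast_mod_eq_sub, sum_sub_distrib, ← mul_sum, Nat.cast_mul] at hperm
  have hgauss := sum_Ico_id_mul_two (R := ℤ) k
  apply mul_left_cancel₀ (show (k : ℤ) ≠ 0 by positivity)
  linear_combination (-2) * hperm + (h - 1) * hgauss

lemma sum_Ico_div_sq {h k : ℕ} (hcop : h.Coprime k) (hh : 0 < h) (hk : 0 < k) :
    ∑ i ∈ Ico 1 k, ((h * i / k : ℕ) : ℤ) ^ 2 =
      (k - 1) * (h - 1) ^ 2 - 2 * weightedFloorSum k h + ∑ M ∈ Ico 1 h, ((k * M / h : ℕ) : ℤ) := by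
  have hlt : ∀ i ∈ Ico 1 k, h * i / k < h := fun i hi =>
    (Nat.div_lt_iff_lt_mul hk).2 ((Nat.mul_lt_mul_left hh).2 (mem_Ico.1 hi).2)
  have hcount : ∀ M ∈ Ico 1 h, (2 * (M : ℤ) - 1) * #{i ∈ Ico 1 k | M ≤ h * i / k} =
      (k - 1) * (2 * M - 1) - 2 * ((M * (k * M / h) : ℕ) : ℤ) + ((k * M / h : ℕ) : ℤ) := by
    intro M hM
    obtain ⟨hM0, hMh⟩ := mem_Ico.1 hM
    have hdiv : k * M / h < k :=
      (Nat.div_lt_iff_lt_mul hh).2 ((Nat.mul_lt_mul_left hk).2 hMh)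
    rw [filter_le_mul_div_eq_Ioo hcop hk hM0 hMh, Nat.card_Ioo, Nat.cast_mul,
      Nat.cast_sub (by omega), Nat.cast_sub hdiv.le]
    ring
  have hodd := sum_Ico_two_mul_sub_one (h - 1)
  rw [Nat.sub_add_cancel hh, Nat.cast_pred hh] at hodd
  rw [sum_sq_eq_sum_Ico_mul_card _ _ hlt, sum_congr rfl hcount, sum_add_distrib, sum_sub_distrib,
    ← mul_sum, ← mul_sum, hodd, weightedFloorSum, Nat.cast_sum]

theorem twelve_mul_weightedFloorSum_add {h k : ℕ} (hcop : h.Coprime k) (hh : 0 < h) (hk : 0 < k) :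
    12 * ((h : ℤ) * weightedFloorSum h k + k * weightedFloorSum k h) =
      (h - 1) * (k - 1) * (8 * h * k - h - k - 1) := by
  have hsq : ∑ i ∈ Ico 1 k, (i : ℤ) ^ 2 =
      h ^ 2 * ∑ i ∈ Ico 1 k, (i : ℤ) ^ 2 - 2 * h * k * weightedFloorSum h k
        + k ^ 2 * ∑ i ∈ Ico 1 k, ((h * i / k : ℕ) : ℤ) ^ 2 := by
    conv_lhs => rw [← sum_Ico_mul_mod hcop (fun r => (r : ℤ) ^ 2)]
    rw [weightedFloorSum, Nat.cast_sum, mul_sum, mul_sum, mul_sum, ← sum_sub_distrib,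
      ← sum_add_distrib]
    refine sum_congr rfl fun i _ => ?_
    rw [natCast_mod_eq_sub]
    push_cast
    ring
  have hS := sum_Ico_sq_mul_six (R := ℤ) k
  have hV := sum_Ico_div_sq hcop hh hk
  have hD := sum_Ico_div_mul_two hcop.symm hh
  apply mul_left_cancel₀ (show (k : ℤ) ≠ 0 by positivity)
  linear_combination 6 * hsq + 6 * k ^ 2 * hV + 3 * k ^ 2 * hD + (h ^ 2 - 1) * hS

lemma dedekindSum_natCast_eq_sum {h k : ℕ} (hcop : h.Coprime k) (hk : 0 < k) :
    dedekindSum h k = ∑ i ∈ Ico 1 k, ((i : ℝ) / k - 1 / 2) * ((h * i % k : ℕ) / k - 1 / 2) := by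
  rw [dedekindSum, Int.toNat_natCast, Icc_eq_cons_Ico hk, sum_cons]
  simp only [Int.cast_natCast, div_self (show (k : ℝ) ≠ 0 by positivity), saw_one, zero_mul,
    zero_add]
  refine sum_congr rfl fun i hi => ?_
  obtain ⟨hi0, hik⟩ := mem_Ico.1 hi
  rw [← Nat.cast_mul, saw_natCast_div hk (Nat.not_dvd_of_pos_of_lt hi0 hik),
    saw_natCast_div hk (hcop.not_dvd_mul_of_lt hi0 hik), Nat.mod_eq_of_lt hik]

lemma twelve_mul_dedekindSum {h k : ℕ} (hcop : h.Coprime k) (hk : 0 < k) :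
    12 * k * dedekindSum h k =
      2 * h * (k - 1) * (2 * k - 1) - 12 * weightedFloorSum h k - 3 * k * (k - 1) := by
  have hterm : ∀ i ∈ Ico 1 k, 12 * k * (((i : ℝ) / k - 1 / 2) * ((h * i % k : ℕ) / k - 1 / 2)) =
      12 * h / k * (i : ℝ) ^ 2 - 12 * ((i * (h * i / k) : ℕ) : ℝ) - 6 * (h + 1) * i
        + 6 * k * ((h * i / k : ℕ) : ℝ) + 3 * k := by
    intro i _
    rw [natCast_mod_eq_sub]
    push_cast
    field_simp
    ring
  rw [dedekindSum_natCast_eq_sum hcop hk, mul_sum, sum_congr rfl hterm]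
  simp only [sum_add_distrib, sum_sub_distrib, ← mul_sum, sum_const, Nat.card_Ico, nsmul_eq_mul]
  have hS : 6 * ∑ i ∈ Ico 1 k, (i : ℝ) ^ 2 = (k - 1) * k * (2 * k - 1) := sum_Ico_sq_mul_six k
  have hI : 2 * ∑ i ∈ Ico 1 k, (i : ℝ) = k * (k - 1) := sum_Ico_id_mul_two k
  have hD : 2 * ∑ i ∈ Ico 1 k, ((h * i / k : ℕ) : ℝ) = (h - 1) * (k - 1) := by
    have := congrArg (Int.cast : ℤ → ℝ) (sum_Ico_div_mul_two hcop hk)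
    push_cast at this
    exact this
  rw [weightedFloorSum, Nat.cast_sum, Nat.cast_pred hk]
  field_simp
  linear_combination 2 * h * hS - 3 * k * (h + 1) * hI + 3 * k ^ 2 * hD

theorem dedekindSum_add_dedekindSum {h k : ℕ} (hcop : h.Coprime k) (hh : 0 < h) (hk : 0 < k) :
    12 * (dedekindSum h k + dedekindSum k h) = -3 + h / k + k / h + 1 / (h * k) := by
  have hhk := twelve_mul_dedekindSum hcop hk
  have hkh := twelve_mul_dedekindSum hcop.symm hh
  have hT : 12 * ((h : ℝ) * weightedFloorSum h k + k * weightedFloorSum k h) =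
      (h - 1) * (k - 1) * (8 * h * k - h - k - 1) := by
    exact_mod_cast twelve_mul_weightedFloorSum_add hcop hh hk
  field_simp
  linear_combination h * hhk + k * hkh - hT

def dedekindSumEuclid : ℕ → ℕ → ℚ
  | 0, _ => 0
  | h + 1, k => (-3 + (h + 1 : ℚ) / k + k / (h + 1) + 1 / ((h + 1) * k)) / 12
      - dedekindSumEuclid (k % (h + 1)) (h + 1)
decreasing_by exact Nat.mod_lt _ h.succ_pos

theorem dedekindSum_eq_dedekindSumEuclid {h k : ℕ} (hcop : h.Coprime k) (hk : 0 < k) :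
    dedekindSum h k = dedekindSumEuclid h k := by
  induction h using Nat.strong_induction_on generalizing k with
  | _ h ih =>
    rcases h with _ | h
    · simp [dedekindSum_zero_left, dedekindSumEuclid]
    · have hrec := dedekindSum_add_dedekindSum hcop h.succ_pos hk
      rw [← dedekindSum_natCast_mod k (h + 1),
        ih _ (Nat.mod_lt _ h.succ_pos) (by rwa [Nat.Coprime, ← Nat.gcd_rec]) h.succ_pos] at hrec
      rw [dedekindSumEuclid]
      push_cast at hrec ⊢
      linarith

theorem example_computation :
    12 * dedekindSum 627251 172769740 = -3 + 2 / 172769740 + 25090 / 6886 ∧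
      |12 * dedekindSum 627251 172769740 - 7 / 11| < 1 / 100 := by
  have hvalue : dedekindSumEuclid 627251 172769740 = 55599441 / 1036618440 := by
    norm_num [dedekindSumEuclid]
  have hs : dedekindSum 627251 172769740 = 55599441 / 1036618440 := by
    have := dedekindSum_eq_dedekindSumEuclid (h := 627251) (k := 172769740) (by norm_num)
      (by norm_num)
    push_cast [hvalue] at this
    exact this
  rw [hs]
  norm_num [abs_lt]
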